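/- Let p > 5 be prime with −1 a residue and 2, 3 non-residues mod p. If 𝒫_p were metrizable, then there would exist positive reals (x_a)_{a ∈ R} with x_a = x_{−a} satisfying 2x_a ≤ x_b + x_c for all a,b,c ∈ R with 2a = b + c ≠ 3, and 3x_1 ≤ x_b + x_c for all b,c ∈ R with b + c = 3. -/

import Mathlib

open scoped Classical

/-- `a` is a (nonzero) quadratic residue in `ZMod p`. -/
def IsQR (p : ℕ) (a : ZMod p) : Prop := a ≠ 0 ∧ IsSquare a

/-- The Paley graph on `𝔽_p`: `a ~ b` iff `a - b` is a nonzero quadratic residue.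
(The adjacency is stated symmetrically; when `-1` is a residue this agrees with
the usual definition.) -/
def paley (p : ℕ) : SimpleGraph (ZMod p) where
  Adj a b := a ≠ b ∧ IsSquare (a - b) ∧ IsSquare (b - a)
  symm := by constructor; intro a b h; exact ⟨h.1.symm, h.2.2, h.2.1⟩
  loopless := by constructor; intro a h; exact h.1 rfl

/-- The list of vertices of the path `P_{a,b}` of the path system `𝒫_p`. -/
noncomputable def specList (p : ℕ) (a b : ZMod p) : List (ZMod p) :=
  if IsQR p (b - a) then [a, b]
  else if b - a = 3 then [a, a + 1, a + 2, b]
  else [a, (a + b) * (2 : ZMod p)⁻¹, b]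

/-- Weight of a walk: sum of the weights of its edges. -/
noncomputable def walkWeight {V : Type*} (w : V → V → ℝ) {G : SimpleGraph V} {u v : V}
    (W : G.Walk u v) : ℝ :=
  (W.darts.map fun d => w d.toProd.1 d.toProd.2).sum

/-! Sum the metrizing weight over translations, `x_a = ∑ t, w t (t + a)`. For residues `b, c` the
walk `t, t + b, t + b + c` is a path of the Paley graph, hence at least as heavy as `P_{t, t+b+c}`.
If `b + c = 2a` is a non-residue other than `3`, that path is `t, t + a, t + 2a`; if `b + c = 3`, it
is `t, t + 1, t + 2, t + 3`. Summing over `t` gives the two inequalities, because the edges of a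
fixed difference `d` over all translates weigh `x_d` in total. -/

open SimpleGraph

noncomputable def listWeight {V : Type*} (w : V → V → ℝ) (l : List V) : ℝ :=
  ((l.zip l.tail).map fun q => w q.1 q.2).sum

@[simp]
lemma listWeight_cons_cons {V : Type*} (w : V → V → ℝ) (a b : V) (l : List V) :
    listWeight w (a :: b :: l) = w a b + listWeight w (b :: l) := by
  simp [listWeight]

@[simp]
lemma listWeight_singleton {V : Type*} (w : V → V → ℝ) (a : V) : listWeight w [a] = 0 := by
  simp [listWeight]

lemma walkWeight_cons_cons_nil {V : Type*} (w : V → V → ℝ) {G : SimpleGraph V} {u m v : V}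
    (hum : G.Adj u m) (hmv : G.Adj m v) :
    walkWeight w (Walk.cons hum (Walk.cons hmv Walk.nil)) = w u m + w m v := by
  simp [walkWeight]

section TranslationSum

variable {G : Type*} [AddCommGroup G] [Fintype G]

/-- The paper's `x_a`, up to the factor `p` of the translation average. -/
noncomputable def translationSum (w : G → G → ℝ) (a : G) : ℝ :=
  ∑ t, w t (t + a)

lemma translationSum_sub (w : G → G → ℝ) (b c : G) :
    translationSum w (c - b) = ∑ t, w (t + b) (t + c) := by
  rw [translationSum, ← Equiv.sum_comp (Equiv.addRight b)]
  refine Finset.sum_congr rfl fun t _ => ?_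
  simp only [Equiv.coe_addRight, add_assoc, add_sub_cancel]

lemma translationSum_neg {w : G → G → ℝ} (hsymm : ∀ a b, w a b = w b a) (a : G) :
    translationSum w (-a) = translationSum w a := by
  rw [← zero_sub, translationSum_sub]
  exact Finset.sum_congr rfl fun t _ => by rw [add_zero, hsymm]

end TranslationSum

def SpecPathsAreShortest (p : ℕ) (w : ZMod p → ZMod p → ℝ) : Prop :=
  ∀ a b : ZMod p, a ≠ b → ∀ Q : (paley p).Walk a b, Q.IsPath →
    listWeight w (specList p a b) ≤ walkWeight w Q

section Paley

variable {p : ℕ}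

lemma listWeight_specList_le {w : ZMod p → ZMod p → ℝ} (hopt : SpecPathsAreShortest p w)
    {u m v : ZMod p} (hum : (paley p).Adj u m) (hmv : (paley p).Adj m v) (huv : u ≠ v) :
    listWeight w (specList p u v) ≤ w u m + w m v := by
  have hpath : (Walk.cons hum (Walk.cons hmv Walk.nil)).IsPath := by
    simp [Walk.isPath_def, hum.ne, hmv.ne, huv]
  simpa [walkWeight_cons_cons_nil] using hopt u v huv _ hpath

lemma natCast_ne_zero_of_lt {n : ℕ} (hn : 0 < n) (hnp : n < p) : (n : ZMod p) ≠ 0 := by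
  rw [Ne, ZMod.natCast_eq_zero_iff]
  exact fun h => (Nat.le_of_dvd hn h).not_gt hnp

lemma paley_adj_add_of_isQR (h1 : IsQR p (-1)) {d : ZMod p} (hd : IsQR p d) (t : ZMod p) :
    (paley p).Adj t (t + d) := by
  refine ⟨fun h => hd.1 (left_eq_add.mp h), ?_, by simpa using hd.2⟩
  simpa using h1.2.mul hd.2

lemma specList_add_three (h3 : ¬ IsQR p 3) (t : ZMod p) :
    specList p t (t + 3) = [t, t + 1, t + 2, t + 3] := by
  rw [specList, add_sub_cancel_left, if_neg h3, if_pos rfl]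

section NeZero

variable [NeZero p]

lemma sum_listWeight_specList_le (h1 : IsQR p (-1)) {w : ZMod p → ZMod p → ℝ}
    (hopt : SpecPathsAreShortest p w) {b c d : ZMod p} (hb : IsQR p b) (hc : IsQR p c)
    (hbcd : b + c = d) (hd : d ≠ 0) :
    ∑ t, listWeight w (specList p t (t + d)) ≤ translationSum w b + translationSum w c := by
  have hstep (t : ZMod p) :
      listWeight w (specList p t (t + d)) ≤ w t (t + b) + w (t + b) (t + d) := by
    refine listWeight_specList_le hopt (paley_adj_add_of_isQR h1 hb t) ?_
      (fun h => hd (left_eq_add.mp h))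
    simpa [← hbcd, add_assoc] using paley_adj_add_of_isQR h1 hc (t + b)
  calc ∑ t, listWeight w (specList p t (t + d))
      ≤ ∑ t, (w t (t + b) + w (t + b) (t + d)) := Finset.sum_le_sum fun t _ => hstep t
    _ = translationSum w b + translationSum w c := by
      rw [Finset.sum_add_distrib, ← translationSum_sub, ← hbcd, add_sub_cancel_left]
      rfl

lemma translationSum_pos (h1 : IsQR p (-1)) {w : ZMod p → ZMod p → ℝ}
    (hpos : ∀ a b, (paley p).Adj a b → 0 < w a b) {a : ZMod p} (ha : IsQR p a) :
    0 < translationSum w a :=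
  Finset.sum_pos (fun t _ => hpos _ _ (paley_adj_add_of_isQR h1 ha t)) Finset.univ_nonempty

lemma three_mul_translationSum_one_le (h1 : IsQR p (-1)) (h3 : ¬ IsQR p 3)
    (h3z : (3 : ZMod p) ≠ 0) {w : ZMod p → ZMod p → ℝ} (hopt : SpecPathsAreShortest p w)
    {b c : ZMod p} (hb : IsQR p b) (hc : IsQR p c) (hbc : b + c = 3) :
    3 * translationSum w 1 ≤ translationSum w b + translationSum w c := by
  calc 3 * translationSum w 1
      = ∑ t, listWeight w (specList p t (t + 3)) := by
        simp only [specList_add_three h3, listWeight_cons_cons, listWeight_singleton, add_zero,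
          Finset.sum_add_distrib]
        rw [← translationSum_sub, ← translationSum_sub, show (2 : ZMod p) - 1 = 1 by ring,
          show (3 : ZMod p) - 2 = 1 by ring]
        change _ = translationSum w 1 + _
        ring
    _ ≤ translationSum w b + translationSum w c :=
        sum_listWeight_specList_le h1 hopt hb hc hbc h3z

end NeZero

section Prime

variable [Fact p.Prime]

lemma not_isQR_mul_of_isQR {s a : ZMod p} (hs : ¬ IsQR p s) (hs0 : s ≠ 0) (ha : IsQR p a) :
    ¬ IsQR p (s * a) := fun hsa =>
  hs ⟨hs0, by simpa [ha.1] using hsa.2.div ha.2⟩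

lemma specList_add_two_mul (h2 : (2 : ZMod p) ≠ 0) {a : ZMod p} (ha : ¬ IsQR p (2 * a))
    (ha3 : 2 * a ≠ 3) (t : ZMod p) :
    specList p t (t + 2 * a) = [t, t + a, t + 2 * a] := by
  rw [specList, add_sub_cancel_left, if_neg ha, if_neg ha3,
    show t + (t + 2 * a) = (t + a) * 2 by ring, mul_inv_cancel_right₀ h2]

lemma two_mul_translationSum_le (h1 : IsQR p (-1)) (h2 : ¬ IsQR p 2) (h2z : (2 : ZMod p) ≠ 0)
    {w : ZMod p → ZMod p → ℝ} (hopt : SpecPathsAreShortest p w) {a b c : ZMod p}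
    (ha : IsQR p a) (hb : IsQR p b) (hc : IsQR p c) (habc : 2 * a = b + c) (hbc : b + c ≠ 3) :
    2 * translationSum w a ≤ translationSum w b + translationSum w c := by
  have h2a := not_isQR_mul_of_isQR h2 h2z ha
  calc 2 * translationSum w a
      = ∑ t, listWeight w (specList p t (t + 2 * a)) := by
        simp only [specList_add_two_mul h2z h2a (habc ▸ hbc), listWeight_cons_cons,
          listWeight_singleton, add_zero, Finset.sum_add_distrib]
        rw [← translationSum_sub, show 2 * a - a = a by ring]
        exact two_mul _
    _ ≤ translationSum w b + translationSum w c :=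
        sum_listWeight_specList_le h1 hopt hb hc habc.symm (mul_ne_zero h2z ha.1)

end Prime

end Paley

theorem stmt_19 (p : ℕ) [Fact p.Prime] (hp : 5 < p)
    (h1 : IsQR p (-1)) (h2 : ¬ IsQR p 2) (h3 : ¬ IsQR p 3)
    -- suppose `𝒫_p` is metrizable:
    (hmet : ∃ w : ZMod p → ZMod p → ℝ,
      (∀ a b, (paley p).Adj a b → 0 < w a b) ∧
      (∀ a b, w a b = w b a) ∧
      (∀ a b : ZMod p, a ≠ b → ∀ Q : (paley p).Walk a b, Q.IsPath →
        ((specList p a b).zip (specList p a b).tail |>.map fun q => w q.1 q.2).sum ≤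
          walkWeight w Q)) :
    ∃ x : ZMod p → ℝ,
      (∀ a : ZMod p, IsQR p a → 0 < x a) ∧
      (∀ a : ZMod p, IsQR p a → x a = x (-a)) ∧
      (∀ a b c : ZMod p, IsQR p a → IsQR p b → IsQR p c →
        2 * a = b + c → b + c ≠ 3 → 2 * x a ≤ x b + x c) ∧
      (∀ b c : ZMod p, IsQR p b → IsQR p c → b + c = 3 →
        3 * x 1 ≤ x b + x c) := by
  obtain ⟨w, hpos, hsymm, hopt⟩ := hmet
  have h2z : (2 : ZMod p) ≠ 0 := by exact_mod_cast natCast_ne_zero_of_lt (p := p) two_pos (by omega)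
  have h3z : (3 : ZMod p) ≠ 0 := by exact_mod_cast natCast_ne_zero_of_lt (p := p) three_pos (by omega)
  exact ⟨translationSum w,
    fun a ha => translationSum_pos h1 hpos ha,
    fun a _ => (translationSum_neg hsymm a).symm,
    fun a b c ha hb hc habc hbc => two_mul_translationSum_le h1 h2 h2z hopt ha hb hc habc hbc,
    fun b c hb hc hbc => three_mul_translationSum_one_le h1 h3 h3z hopt hb hc hbc⟩
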